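/- Let R be a field of characteristic zero, n ≥ 3, and let φ = Λ ∘ σ^m ∘ ψ_D ∘ Δ be an automorphism of UT_n(R), where Λ is a central automorphism, σ is the flip automorphism, m ∈ {0,1}, ψ_D is a diagonal automorphism, and Δ is a ring automorphism. If R(φ) < ∞, then every element of UT_n(R) is φ-conjugate to some element of the center Z₁ of UT_n(R). -/

import Mathlib

open Matrix

/-- `x` and `y` are twisted conjugate with respect to the automorphism `φ`,
i.e. `x = z * y * (φ z)⁻¹` for some `z`. -/
def TwistedConj {G : Type*} [Group G] (φ : G ≃* G) (x y : G) : Prop :=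
  ∃ z : G, x = z * y * (φ z)⁻¹

/-- The Reidemeister number of an automorphism: the number of twisted conjugacy classes,
as an element of `ℕ∞ = ℕ ∪ {∞}` (`⊤` meaning infinitely many classes). -/
noncomputable def reidemeisterNumber {G : Type*} [Group G] (φ : G ≃* G) : ℕ∞ :=
  Cardinal.toENat (Cardinal.mk (Quot (TwistedConj φ)))

/-- A matrix is (upper) unitriangular if it has `1` on the diagonal and `0` below it. -/
def Matrix.IsUnitriangular {n : ℕ} {R : Type*} [CommRing R]
    (M : Matrix (Fin n) (Fin n) R) : Prop :=
  (∀ i, M i i = 1) ∧ ∀ ⦃i j : Fin n⦄, j < i → M i j = 0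

namespace Matrix.IsUnitriangular

variable {n : ℕ} {R : Type*} [CommRing R] {M N : Matrix (Fin n) (Fin n) R}

theorem blockTriangular (h : M.IsUnitriangular) : M.BlockTriangular (id : Fin n → Fin n) :=
  fun _ _ hij => h.2 hij

theorem one : (1 : Matrix (Fin n) (Fin n) R).IsUnitriangular :=
  ⟨fun i => by simp, fun i j hij => by simp [Matrix.one_apply, (ne_of_lt hij).symm]⟩

theorem diag_mul (hM : M.IsUnitriangular) (hN : N.BlockTriangular (id : Fin n → Fin n))
    (i : Fin n) : (M * N) i i = N i i := by
  rw [Matrix.mul_apply, Finset.sum_eq_single i]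
  · rw [hM.1 i, one_mul]
  · intro k _ hk
    rcases lt_or_gt_of_ne hk with hlt | hgt
    · rw [hM.2 hlt, zero_mul]
    · rw [hN (show (id i : Fin n) < id k from hgt), mul_zero]
  · intro h; exact absurd (Finset.mem_univ i) h

theorem mul (hM : M.IsUnitriangular) (hN : N.IsUnitriangular) : (M * N).IsUnitriangular := by
  constructor
  · intro i
    rw [hM.diag_mul hN.blockTriangular i, hN.1 i]
  · intro i j hij
    rw [Matrix.mul_apply]
    refine Finset.sum_eq_zero fun k _ => ?_
    rcases lt_or_ge k i with hk | hk
    · rw [hM.2 hk, zero_mul]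
    · rw [hN.2 (lt_of_lt_of_le hij hk), mul_zero]

end Matrix.IsUnitriangular

/-- The group `UT n R` of upper unitriangular `n × n` matrices over `R`, realized as a
subgroup of the group of units of the matrix ring. -/
def UT (n : ℕ) (R : Type*) [CommRing R] : Subgroup (Matrix (Fin n) (Fin n) R)ˣ where
  carrier := {u | Matrix.IsUnitriangular (u : Matrix (Fin n) (Fin n) R)}
  one_mem' := by simpa using Matrix.IsUnitriangular.one
  mul_mem' := by
    intro a b ha hb
    simpa using ha.mul hb
  inv_mem' := by
    intro u hu
    have hdet : IsUnit ((u : Matrix (Fin n) (Fin n) R)).det :=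
      (Matrix.isUnit_iff_isUnit_det _).mp u.isUnit
    haveI : Invertible (u : Matrix (Fin n) (Fin n) R) := u.invertible
    have htri : ((u : Matrix (Fin n) (Fin n) R)⁻¹).BlockTriangular (id : Fin n → Fin n) :=
      Matrix.blockTriangular_inv_of_blockTriangular hu.blockTriangular
    have hval : ((u⁻¹ : (Matrix (Fin n) (Fin n) R)ˣ) : Matrix (Fin n) (Fin n) R)
        = (u : Matrix (Fin n) (Fin n) R)⁻¹ := by
      simp [Matrix.coe_units_inv]
    constructor
    · intro i
      have h1 : ((u : Matrix (Fin n) (Fin n) R) * (u : Matrix (Fin n) (Fin n) R)⁻¹) i i = 1 := by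
        rw [Matrix.mul_nonsing_inv _ hdet]; simp
      rw [hval]
      rw [hu.diag_mul htri i] at h1
      exact h1
    · intro i j hij
      rw [hval]
      exact htri hij

/-- The underlying matrix of an element of `UT n R`. -/
def UTmat {n : ℕ} {R : Type*} [CommRing R] (X : UT n R) : Matrix (Fin n) (Fin n) R :=
  ((X : (Matrix (Fin n) (Fin n) R)ˣ) : Matrix (Fin n) (Fin n) R)

section Generators

variable {n : ℕ} {R : Type*} [CommRing R]

theorem TU_mul_aux (i j : Fin n) (h : i < j) (x : R) :
    (1 + Matrix.single i j x) * (1 + Matrix.single i j (-x)) = 1 := by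
  have h0 : Matrix.single i j x * Matrix.single i j (-x) = 0 :=
    Matrix.single_mul_single_of_ne (c := x) i j i (ne_of_lt h).symm (-x)
  have h1 : Matrix.single i j x + Matrix.single i j (-x) = 0 := by
    rw [← Matrix.single_add]; simp
  calc (1 + Matrix.single i j x) * (1 + Matrix.single i j (-x))
      = 1 + (Matrix.single i j x + Matrix.single i j (-x))
        + Matrix.single i j x * Matrix.single i j (-x) := by noncomm_ring
    _ = 1 := by rw [h1, h0, add_zero, add_zero]

theorem TU_isUnitriangular (i j : Fin n) (h : i < j) (x : R) :
    ((1 + Matrix.single i j x) : Matrix (Fin n) (Fin n) R).IsUnitriangular := by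
  constructor
  · intro k
    rw [Matrix.add_apply, Matrix.one_apply_eq,
      Matrix.single_apply_of_ne i j x k k (by rintro ⟨rfl, rfl⟩; exact lt_irrefl _ h)]
    ring
  · intro k l hkl
    rw [Matrix.add_apply, Matrix.one_apply_ne (ne_of_gt hkl),
      Matrix.single_apply_of_ne i j x k l
        (by rintro ⟨rfl, rfl⟩; exact absurd h (not_lt.mpr hkl.le))]
    ring

/-- The elementary unitriangular matrix `T_{i,j}(x) = I + x·E_{i,j}` as an element of
`UT n R` (with junk value `1` when `¬ i < j`). -/
noncomputable def TU (i j : Fin n) (x : R) : UT n R :=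
  if h : i < j then
    ⟨⟨1 + Matrix.single i j x, 1 + Matrix.single i j (-x),
      TU_mul_aux i j h x, by simpa using TU_mul_aux i j h (-x)⟩, TU_isUnitriangular i j h x⟩
  else 1

/-- `ψ` is the diagonal automorphism `X ↦ D X D⁻¹` associated to a diagonal matrix `D`
with unit diagonal entries. -/
def IsDiagonalAut (ψ : MulAut (UT n R)) : Prop :=
  ∃ d : Fin n → Rˣ, ∀ X : UT n R,
    UTmat (ψ X) = Matrix.diagonal (fun i => (d i : R)) * UTmat X
      * Matrix.diagonal (fun i => (((d i)⁻¹ : Rˣ) : R))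

/-- `Δ` is the ring automorphism of `UT n R` induced entrywise by a ring automorphism of `R`. -/
def IsRingAut (Δ : MulAut (UT n R)) : Prop :=
  ∃ δ : R ≃+* R, ∀ (X : UT n R) (i j : Fin n), UTmat (Δ X) i j = δ (UTmat X i j)

/-- `σ` is the flip automorphism: reflect the matrix across the antidiagonal, then invert. -/
def IsFlipAut (σ : MulAut (UT n R)) : Prop :=
  ∀ X : UT n R, UTmat (σ X) = (Matrix.of fun i j : Fin n => UTmat X j.rev i.rev)⁻¹

/-- `Λ` is a central automorphism: there is an additive endomorphism `λ` of `R` such that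
`Λ(T_{i,i+1}(x)) = T_{i,i+1}(x) · T_{1,n}(λ(x))` on the generators. -/
noncomputable def IsCentralAut (h0 : 0 < n) (Λ : MulAut (UT n R)) : Prop :=
  ∃ lam : R →+ R, ∀ i j : Fin n, (j : ℕ) = (i : ℕ) + 1 → ∀ x : R,
    Λ (TU i j x) = TU i j x * TU ⟨0, h0⟩ ⟨n - 1, Nat.sub_lt h0 Nat.one_pos⟩ (lam x)

end Generators

/-!
Let `γ_k ≤ UT n R` consist of the matrices that agree with `1` below the `k`-th superdiagonal.
Reading off the `k`-th superdiagonal is a homomorphism `γ_k → R^(n-k)` that is invariant under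
conjugation, so its values on the twisted commutators `z φ(z)⁻¹` lying in `γ_k` form an additive
subgroup `S_k`, and the superdiagonals of two `φ`-conjugate elements of `γ_k` differ by an element
of `S_k`. Every vector is the superdiagonal of some element of `γ_k`, so finitely many
`φ`-classes force `S_k` to have finite index in the `ℚ`-vector space `R^(n-k)`, i.e. `S_k` is
everything. Hence every element of `γ_k` is `φ`-conjugate into `γ_(k+1)`, and descending to
`γ_n = 1` shows that every element is `φ`-conjugate to the central element `1`.
-/

theorem twistedConj_equivalence {G : Type*} [Group G] (φ : G ≃* G) :
    Equivalence (TwistedConj φ) where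
  refl x := ⟨1, by simp⟩
  symm := by
    rintro x y ⟨z, rfl⟩
    exact ⟨z⁻¹, by rw [map_inv]; group⟩
  trans := by
    rintro x y u ⟨z, rfl⟩ ⟨w, rfl⟩
    exact ⟨z * w, by rw [map_mul]; group⟩

theorem finite_quot_twistedConj {G : Type*} [Group G] {φ : G ≃* G}
    (h : reidemeisterNumber φ ≠ ⊤) : Finite (Quot (TwistedConj φ)) := by
  rw [reidemeisterNumber, ne_eq, Cardinal.toENat_eq_top, not_le] at h
  exact Cardinal.mk_lt_aleph0_iff.mp h

theorem AddSubgroup.eq_top_of_finite_quotient {V : Type*} [AddCommGroup V] [Module ℚ V]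
    (S : AddSubgroup V) [Finite (V ⧸ S)] : S = ⊤ := by
  refine eq_top_iff.mpr fun v _ => ?_
  have hN : (S.index : ℚ) ≠ 0 := Nat.cast_ne_zero.mpr S.index_ne_zero_of_finite
  have hv : v = S.index • ((S.index : ℚ)⁻¹ • v) := by
    rw [← Nat.cast_smul_eq_nsmul ℚ, smul_smul, mul_inv_cancel₀ hN, one_smul]
  exact hv ▸ S.nsmul_index_mem _

structure IsConjInvariantHomOn {G V : Type*} [Group G] [AddCommGroup V]
    (H : Subgroup G) (e : G → V) : Prop where
  map_mul : ∀ x ∈ H, ∀ y ∈ H, e (x * y) = e x + e y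
  map_conj : ∀ x ∈ H, ∀ g : G, e (g * x * g⁻¹) = e x

namespace IsConjInvariantHomOn

variable {G V : Type*} [Group G] [AddCommGroup V] {H : Subgroup G} {e : G → V}

theorem map_one (he : IsConjInvariantHomOn H e) : e 1 = 0 := by
  simpa using he.map_mul 1 H.one_mem 1 H.one_mem

theorem map_inv (he : IsConjInvariantHomOn H e) {x : G} (hx : x ∈ H) : e x⁻¹ = -e x := by
  have h := he.map_mul x hx x⁻¹ (H.inv_mem hx)
  rw [mul_inv_cancel, he.map_one] at h
  exact (neg_eq_of_add_eq_zero_right h.symm).symm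

def twistedCommImage [H.Normal] (he : IsConjInvariantHomOn H e) (φ : G ≃* G) :
    AddSubgroup V where
  carrier := {v | ∃ z : G, z * (φ z)⁻¹ ∈ H ∧ e (z * (φ z)⁻¹) = v}
  zero_mem' := ⟨1, by simp, by simp [he.map_one]⟩
  add_mem' := by
    rintro _ _ ⟨z, hz, rfl⟩ ⟨z', hz', rfl⟩
    have hconj : z * (z' * (φ z')⁻¹) * z⁻¹ ∈ H := Subgroup.Normal.conj_mem ‹_› _ hz' z
    have hid : z * z' * (φ (z * z'))⁻¹ = z * (z' * (φ z')⁻¹) * z⁻¹ * (z * (φ z)⁻¹) := by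
      rw [_root_.map_mul]; group
    refine ⟨z * z', hid ▸ H.mul_mem hconj hz, ?_⟩
    rw [hid, he.map_mul _ hconj _ hz, he.map_conj _ hz', add_comm]
  neg_mem' := by
    rintro _ ⟨z, hz, rfl⟩
    have hconj : z⁻¹ * (z * (φ z)⁻¹)⁻¹ * z⁻¹⁻¹ ∈ H :=
      Subgroup.Normal.conj_mem ‹_› _ (H.inv_mem hz) z⁻¹
    have hid : z⁻¹ * (φ z⁻¹)⁻¹ = z⁻¹ * (z * (φ z)⁻¹)⁻¹ * z⁻¹⁻¹ := by
      rw [_root_.map_inv]; group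
    refine ⟨z⁻¹, hid ▸ hconj, ?_⟩
    rw [hid, he.map_conj _ (H.inv_mem hz), he.map_inv hz]

variable [H.Normal]

theorem sub_mem_twistedCommImage (he : IsConjInvariantHomOn H e) {φ : G ≃* G} {x y : G}
    (hx : x ∈ H) (hy : y ∈ H) (h : TwistedConj φ x y) : e x - e y ∈ he.twistedCommImage φ := by
  obtain ⟨z, rfl⟩ := h
  have hconj : z * y * z⁻¹ ∈ H := Subgroup.Normal.conj_mem ‹_› _ hy z
  have hid : z * (φ z)⁻¹ = (z * y * z⁻¹)⁻¹ * (z * y * (φ z)⁻¹) := by group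
  refine ⟨z, hid ▸ H.mul_mem (H.inv_mem hconj) hx, ?_⟩
  rw [hid, he.map_mul _ (H.inv_mem hconj) _ hx, he.map_inv hconj, he.map_conj _ hy,
    neg_add_eq_sub]

theorem finite_quotient_twistedCommImage (he : IsConjInvariantHomOn H e) (φ : G ≃* G)
    [Finite (Quot (TwistedConj φ))] (hsurj : ∀ v, ∃ x ∈ H, e x = v) :
    Finite (V ⧸ he.twistedCommImage φ) := by
  choose s hsH hse using hsurj
  refine Finite.of_injective (fun q => Quot.mk (TwistedConj φ) (s q.out)) fun q q' h => ?_
  have hmem := he.sub_mem_twistedCommImage (hsH _) (hsH _)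
    ((twistedConj_equivalence φ).eqvGen_iff.mp (Quot.eq.mp h))
  rw [hse, hse] at hmem
  rw [← q.out_eq, ← q'.out_eq]
  exact QuotientAddGroup.eq_iff_sub_mem.mpr hmem

theorem exists_twistedConj_map_eq_zero [Module ℚ V] (he : IsConjInvariantHomOn H e)
    (φ : G ≃* G) [Finite (Quot (TwistedConj φ))] (hsurj : ∀ v, ∃ x ∈ H, e x = v) {x : G}
    (hx : x ∈ H) : ∃ w : G, w * x * (φ w)⁻¹ ∈ H ∧ e (w * x * (φ w)⁻¹) = 0 := by
  have := he.finite_quotient_twistedCommImage φ hsurj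
  obtain ⟨w, hw, hwe⟩ : -e x ∈ he.twistedCommImage φ := by
    rw [AddSubgroup.eq_top_of_finite_quotient (he.twistedCommImage φ)]
    exact AddSubgroup.mem_top _
  have hconj : w * x * w⁻¹ ∈ H := Subgroup.Normal.conj_mem ‹_› _ hx w
  have hid : w * x * (φ w)⁻¹ = w * x * w⁻¹ * (w * (φ w)⁻¹) := by group
  refine ⟨w, hid ▸ H.mul_mem hconj hw, ?_⟩
  rw [hid, he.map_mul _ hconj _ hw, he.map_conj _ hx, hwe, add_neg_cancel]

end IsConjInvariantHomOn

namespace Matrix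

variable {n : ℕ} {R : Type*} [CommRing R]

def VanishesBelowSuperdiag (k : ℕ) (N : Matrix (Fin n) (Fin n) R) : Prop :=
  ∀ i j : Fin n, (j : ℕ) < i + k → N i j = 0

variable {k : ℕ} {A N : Matrix (Fin n) (Fin n) R} {i j : Fin n}

theorem IsUnitriangular.mul_apply_eq_right (hA : A.IsUnitriangular)
    (hN : N.VanishesBelowSuperdiag k) (hij : (j : ℕ) ≤ i + k) : (A * N) i j = N i j := by
  rw [mul_apply, Finset.sum_eq_single i]
  · rw [hA.1, one_mul]
  · intro l _ hl
    rcases lt_or_gt_of_ne hl with hli | hil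
    · rw [hA.2 hli, zero_mul]
    · rw [hN l j (by rw [Fin.lt_def] at hil; omega), mul_zero]
  · simp

theorem IsUnitriangular.mul_apply_eq_left (hA : A.IsUnitriangular)
    (hN : N.VanishesBelowSuperdiag k) (hij : (j : ℕ) ≤ i + k) : (N * A) i j = N i j := by
  rw [mul_apply, Finset.sum_eq_single j]
  · rw [hA.1, mul_one]
  · intro l _ hl
    rcases lt_or_gt_of_ne hl with hlj | hjl
    · rw [hN i l (by rw [Fin.lt_def] at hlj; omega), zero_mul]
    · rw [hA.2 hjl, mul_zero]
  · simp

theorem VanishesBelowSuperdiag.mul_isUnitriangular (hN : N.VanishesBelowSuperdiag k)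
    (hA : A.IsUnitriangular) : (N * A).VanishesBelowSuperdiag k := fun i j hij => by
  rw [hA.mul_apply_eq_left hN hij.le, hN i j hij]

end Matrix

namespace UT

variable {n : ℕ} {R : Type*} [CommRing R]

theorem isUnitriangular (X : UT n R) : (UTmat X).IsUnitriangular := X.2

theorem UTmat_mul (X Y : UT n R) : UTmat (X * Y) = UTmat X * UTmat Y := rfl

theorem UTmat_one : UTmat (1 : UT n R) = 1 := rfl

theorem ext_UTmat {X Y : UT n R} (h : UTmat X = UTmat Y) : X = Y :=
  Subtype.ext (Units.ext h)

noncomputable def ofIsUnitriangular {M : Matrix (Fin n) (Fin n) R} (hM : M.IsUnitriangular) :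
    UT n R :=
  ⟨((isUnit_iff_isUnit_det M).mpr
    (by simp [det_of_isUpperTriangular hM.blockTriangular, hM.1])).unit, hM⟩

theorem UTmat_ofIsUnitriangular {M : Matrix (Fin n) (Fin n) R} (hM : M.IsUnitriangular) :
    UTmat (ofIsUnitriangular hM) = M := rfl

variable {k : ℕ} {i j : Fin n}

theorem sub_one_mul_apply {X : UT n R} (hX : (UTmat X - 1).VanishesBelowSuperdiag k)
    (Y : UT n R) (hij : (j : ℕ) ≤ i + k) :
    (UTmat (X * Y) - 1) i j = (UTmat X - 1) i j + (UTmat Y - 1) i j := by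
  have h : UTmat (X * Y) - 1 = (UTmat X - 1) * UTmat Y + (UTmat Y - 1) := by
    rw [UTmat_mul, Matrix.sub_mul, one_mul]; abel
  rw [h, Matrix.add_apply, (isUnitriangular Y).mul_apply_eq_left hX hij]

theorem sub_one_conj_apply {X : UT n R} (hX : (UTmat X - 1).VanishesBelowSuperdiag k)
    (Y : UT n R) (hij : (j : ℕ) ≤ i + k) :
    (UTmat (Y * X * Y⁻¹) - 1) i j = (UTmat X - 1) i j := by
  have h : UTmat (Y * X * Y⁻¹) - 1 = UTmat Y * ((UTmat X - 1) * UTmat Y⁻¹) := by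
    rw [Matrix.sub_mul, one_mul, Matrix.mul_sub, ← Matrix.mul_assoc, ← UTmat_mul, ← UTmat_mul,
      ← UTmat_mul, mul_inv_cancel, UTmat_one]
  rw [h, (isUnitriangular Y).mul_apply_eq_right
      (hX.mul_isUnitriangular (isUnitriangular _)) hij,
    (isUnitriangular _).mul_apply_eq_left hX hij]

theorem sub_one_inv_apply {X : UT n R} (hX : (UTmat X - 1).VanishesBelowSuperdiag k)
    (hij : (j : ℕ) ≤ i + k) : (UTmat X⁻¹ - 1) i j = -(UTmat X - 1) i j := by
  have h := sub_one_mul_apply hX X⁻¹ hij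
  rw [mul_inv_cancel, UTmat_one, sub_self, Matrix.zero_apply] at h
  exact eq_neg_of_add_eq_zero_right h.symm

/-- The paper's `γ_k`: for `k ≥ 1`, the `k`-th term of the lower central series, `γ_1 = UT n R`. -/
def level (k : ℕ) : Subgroup (UT n R) where
  carrier := {X | (UTmat X - 1).VanishesBelowSuperdiag k}
  one_mem' := fun i j _ => by simp [UTmat_one]
  mul_mem' := fun {X Y} hX hY i j hij => by
    rw [sub_one_mul_apply hX Y hij.le, hX i j hij, hY i j hij, add_zero]
  inv_mem' := fun {X} hX i j hij => by
    rw [sub_one_inv_apply hX hij.le, hX i j hij, neg_zero]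

theorem mem_level {X : UT n R} : X ∈ level k ↔ (UTmat X - 1).VanishesBelowSuperdiag k :=
  Iff.rfl

instance (k : ℕ) : (level k : Subgroup (UT n R)).Normal where
  conj_mem X hX Y i j hij := by
    rw [sub_one_conj_apply hX Y hij.le]
    exact hX i j hij

def levelEntries (k : ℕ) (X : UT n R) : Fin (n - k) → R :=
  fun i => (UTmat X - 1) ⟨i, by omega⟩ ⟨i + k, by omega⟩

theorem isConjInvariantHomOn_levelEntries (k : ℕ) :
    IsConjInvariantHomOn (level k) (levelEntries k : UT n R → Fin (n - k) → R) where
  map_mul _ hX Y _ := funext fun _ => sub_one_mul_apply hX Y le_rfl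
  map_conj _ hX Y := funext fun _ => sub_one_conj_apply hX Y le_rfl

theorem exists_mem_level_levelEntries_eq (hk : 0 < k) (v : Fin (n - k) → R) :
    ∃ X ∈ (level k : Subgroup (UT n R)), levelEntries k X = v := by
  set N : Matrix (Fin n) (Fin n) R :=
    Matrix.of fun i j => if h : (j : ℕ) = i + k then v ⟨i, by omega⟩ else 0
  have hN : N.VanishesBelowSuperdiag k := fun i j hij => dif_neg (by omega)
  have hM : (1 + N).IsUnitriangular :=
    ⟨fun i => by simp [hN i i (by omega)],
      fun i j hij => by simp [hN i j (by rw [Fin.lt_def] at hij; omega), hij.ne']⟩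
  refine ⟨ofIsUnitriangular hM, by simpa [mem_level, UTmat_ofIsUnitriangular] using hN, ?_⟩
  funext i
  simp [levelEntries, UTmat_ofIsUnitriangular, N]

theorem mem_level_succ {X : UT n R} (hX : X ∈ level k) (h : levelEntries k X = 0) :
    X ∈ level (k + 1) := by
  intro i j hij
  rcases (by omega : (j : ℕ) < i + k ∨ (j : ℕ) = i + k) with hlt | heq
  · exact hX i j hlt
  · rw [show j = ⟨i + k, by omega⟩ from Fin.ext heq]
    exact congrFun h ⟨i, by omega⟩

theorem mem_level_one (X : UT n R) : X ∈ level 1 := by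
  intro i j hij
  rcases (by omega : (j : ℕ) < i ∨ (j : ℕ) = i) with hlt | heq
  · have hji : j < i := Fin.lt_def.mpr hlt
    rw [Matrix.sub_apply, (isUnitriangular X).2 hji, Matrix.one_apply_ne hji.ne', sub_zero]
  · simp [Fin.ext heq, (isUnitriangular X).1]

theorem eq_one_of_mem_level {X : UT n R} (hk : n ≤ k) (hX : X ∈ level k) : X = 1 :=
  ext_UTmat (sub_eq_zero.mp (Matrix.ext fun i j => hX i j (by omega)))

theorem exists_twistedConj_mem_level [Module ℚ R] (φ : UT n R ≃* UT n R)
    [Finite (Quot (TwistedConj φ))] (A : UT n R) (k : ℕ) :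
    ∃ z : UT n R, z * A * (φ z)⁻¹ ∈ level (k + 1) := by
  induction k with
  | zero => exact ⟨1, mem_level_one _⟩
  | succ k ih =>
    obtain ⟨z, hz⟩ := ih
    obtain ⟨w, hw, hw0⟩ := IsConjInvariantHomOn.exists_twistedConj_map_eq_zero
      (isConjInvariantHomOn_levelEntries (k + 1)) φ
      (exists_mem_level_levelEntries_eq k.succ_pos) hz
    refine ⟨w * z, ?_⟩
    rw [show w * z * A * (φ (w * z))⁻¹ = w * (z * A * (φ z)⁻¹) * (φ w)⁻¹ by
      rw [map_mul]; group]
    exact mem_level_succ hw hw0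

theorem twistedConj_one [Module ℚ R] (φ : UT n R ≃* UT n R) [Finite (Quot (TwistedConj φ))]
    (A : UT n R) : TwistedConj φ A 1 := by
  obtain ⟨z, hz⟩ := exists_twistedConj_mem_level φ A n
  refine ⟨z⁻¹, ?_⟩
  calc A = z⁻¹ * (z * A * (φ z)⁻¹) * φ z := by group
    _ = z⁻¹ * 1 * (φ z⁻¹)⁻¹ := by rw [eq_one_of_mem_level (by omega) hz, map_inv, inv_inv]

end UT

theorem twisted_conj_to_central_element
    {R : Type} [Field R] [CharZero R] {n : ℕ}
    (φ : MulAut (UT n R))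
    (hfin : reidemeisterNumber (φ : (UT n R) ≃* (UT n R)) ≠ ⊤) :
    ∀ A : UT n R, ∃ C X : UT n R, C ∈ Subgroup.center (UT n R) ∧
      A = X⁻¹ * C * φ X := by
  have := finite_quot_twistedConj hfin
  intro A
  obtain ⟨z, hz⟩ := UT.twistedConj_one φ A
  exact ⟨1, z⁻¹, Subgroup.one_mem _, by simpa using hz⟩
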